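/- Every rate pair achievable by the mixed MABC protocol region is contained in the DF MABC protocol region: if R_a < min{Δ1·I(X_a;Y_r), Δ2·(I(U_r;Y_b) − I(U_r;U_b))}, R_b < Δ1·I(X_b; Ŷ_r | X_a), and Δ1·I(Y_r; Ŷ_r | X_a) < min{Δ2·I(U_r,U_b; Y_a), Δ2·I(U_b; U_r, Y_a)}, then R_a < min{Δ1·I(X_a;Y_r|X_b), Δ2·I(X_r;Y_b)}, R_b < min{Δ1·I(X_b;Y_r|X_a), Δ2·I(X_r;Y_a)}, and R_a + R_b < Δ1·I(X_a,X_b;Y_r). -/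

import Mathlib

/-!
Conditional mutual information `I(X;Y|Z)` is the Kullback–Leibler divergence of the law of
`(X,Y,Z)` from `p(x,z) p(y,z) / p(z)`, so Gibbs' inequality makes it nonnegative, and it vanishes
under conditional independence; `I(X;Y)` is the case of a constant `Z`. Together with the chain
rule this gives every comparison needed: independence of `X_a, X_b` gives
`I(X_a;Y_r) ≤ I(X_a;Y_r|X_b)`; the Markov chain `(X_a,X_b) → Y_r → Ŷ_r` gives
`I(X_b;Ŷ_r|X_a) ≤ I(X_b;Y_r|X_a)` and `I(X_b;Ŷ_r|X_a) ≤ I(Y_r;Ŷ_r|X_a)`; the chain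
`(U_r,U_b) → X_r → (Y_a,Y_b)` gives `I(U_r,U_b;Y) ≤ I(X_r;Y)` for `Y = Y_a, Y_b`. Each DF bound then
follows from a mixed one, and the sum rate from `I(X_a,X_b;Y_r) = I(X_a;Y_r) + I(X_b;Y_r|X_a)`.
-/

open Finset

namespace BiDir

variable {Ω : Type} [Fintype Ω]

/-- Probability that `X = a` under the pmf `μ` on the finite sample space `Ω`. -/
noncomputable def pr (μ : Ω → ℝ) {A : Type} [Fintype A] [DecidableEq A]
    (X : Ω → A) (a : A) : ℝ :=
  ∑ ω, if X ω = a then μ ω else 0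

/-- Shannon entropy (base 2) of the discrete random variable `X`. -/
noncomputable def ent (μ : Ω → ℝ) {A : Type} [Fintype A] [DecidableEq A]
    (X : Ω → A) : ℝ :=
  -∑ a, pr μ X a * Real.logb 2 (pr μ X a)

/-- Shannon mutual information `I(X;Y)`. -/
noncomputable def mi (μ : Ω → ℝ) {A B : Type} [Fintype A] [DecidableEq A]
    [Fintype B] [DecidableEq B] (X : Ω → A) (Y : Ω → B) : ℝ :=
  ent μ X + ent μ Y - ent μ (fun ω => (X ω, Y ω))

/-- Conditional mutual information `I(X;Y|Z)`. -/
noncomputable def cmi (μ : Ω → ℝ) {A B C : Type} [Fintype A] [DecidableEq A]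
    [Fintype B] [DecidableEq B] [Fintype C] [DecidableEq C]
    (X : Ω → A) (Y : Ω → B) (Z : Ω → C) : ℝ :=
  ent μ (fun ω => (X ω, Z ω)) + ent μ (fun ω => (Y ω, Z ω))
    - ent μ (fun ω => (X ω, Y ω, Z ω)) - ent μ Z

/-- `μ` is a probability mass function. -/
def IsPMF (μ : Ω → ℝ) : Prop := (∀ ω, 0 ≤ μ ω) ∧ ∑ ω, μ ω = 1

/-- `X` and `Y` are independent under `μ`. -/
def Indep (μ : Ω → ℝ) {A B : Type} [Fintype A] [DecidableEq A]
    [Fintype B] [DecidableEq B] (X : Ω → A) (Y : Ω → B) : Prop :=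
  ∀ a b, pr μ (fun ω => (X ω, Y ω)) (a, b) = pr μ X a * pr μ Y b

/-- `X` and `Y` are conditionally independent given `Z` under `μ`
(equivalently, `X → Z → Y` is a Markov chain). -/
def CondIndep (μ : Ω → ℝ) {A B C : Type} [Fintype A] [DecidableEq A]
    [Fintype B] [DecidableEq B] [Fintype C] [DecidableEq C]
    (X : Ω → A) (Y : Ω → B) (Z : Ω → C) : Prop :=
  ∀ a b c, pr μ (fun ω => (X ω, Y ω, Z ω)) (a, b, c) * pr μ Z c =
    pr μ (fun ω => (X ω, Z ω)) (a, c) * pr μ (fun ω => (Y ω, Z ω)) (b, c)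

end BiDir

namespace BiDir

open Real

variable {Ω : Type} [Fintype Ω] {μ : Ω → ℝ}
  {A B C D G : Type} [Fintype A] [DecidableEq A] [Fintype B] [DecidableEq B]
  [Fintype C] [DecidableEq C] [Fintype D] [DecidableEq D] [Fintype G] [DecidableEq G]

theorem sum_mul_log_div_nonneg {ι : Type*} [Fintype ι] {p q : ι → ℝ}
    (hp : ∀ i, 0 ≤ p i) (hq : ∀ i, 0 ≤ q i) (hpq : ∀ i, 0 < p i → 0 < q i)
    (hsum : ∑ i, q i ≤ ∑ i, p i) :
    0 ≤ ∑ i, p i * log (p i / q i) := by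
  have hterm : ∀ i, p i - q i ≤ p i * log (p i / q i) := by
    intro i
    rcases (hp i).eq_or_lt with h0 | h0
    · simp [← h0, hq i]
    · have hqi := hpq i h0
      calc p i - q i = q i * (p i / q i - 1) := by field_simp
        _ ≤ q i * (p i / q i * log (p i / q i)) :=
          mul_le_mul_of_nonneg_left (self_sub_one_le_mul_log (by positivity)) hqi.le
        _ = p i * log (p i / q i) := by field_simp
  calc 0 ≤ ∑ i, (p i - q i) := by rw [sum_sub_distrib]; linarith
    _ ≤ _ := sum_le_sum fun i _ => hterm i

theorem pr_nonneg (hμ : IsPMF μ) (X : Ω → A) (a : A) : 0 ≤ pr μ X a :=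
  sum_nonneg fun ω _ => by split_ifs <;> simp [hμ.1 ω]

theorem sum_pr (hμ : IsPMF μ) (X : Ω → A) : ∑ a, pr μ X a = 1 := by
  unfold pr
  rw [sum_comm]
  simp [hμ.2]

theorem pr_comp (μ : Ω → ℝ) (V : Ω → G) (f : G → A) (a : A) :
    pr μ (fun ω => f (V ω)) a = ∑ v, if f v = a then pr μ V v else 0 := by
  unfold pr
  calc _ = ∑ ω, ∑ v, if V ω = v then (if f v = a then μ ω else 0) else 0 := by simp
    _ = _ := by
      rw [sum_comm]
      congr with v
      split_ifs <;> simp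

theorem pr_comp_of_injective (μ : Ω → ℝ) (V : Ω → G) {g : G → A}
    (hg : Function.Injective g) (v : G) : pr μ (fun ω => g (V ω)) (g v) = pr μ V v := by
  simp [pr, hg.eq_iff]

theorem pr_le_pr_comp (hμ : IsPMF μ) (V : Ω → G) (f : G → A) (v : G) :
    pr μ V v ≤ pr μ (fun ω => f (V ω)) (f v) := by
  rw [pr_comp μ V f]
  refine le_of_eq_of_le (by simp) (single_le_sum (f := fun w => if f w = f v then pr μ V w else 0)
    (fun w _ => ?_) (mem_univ v))
  split_ifs <;> simp [pr_nonneg hμ]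

theorem pr_comp_pos (hμ : IsPMF μ) {V : Ω → G} (f : G → A) {v : G} (h : 0 < pr μ V v) :
    0 < pr μ (fun ω => f (V ω)) (f v) :=
  h.trans_le (pr_le_pr_comp hμ V f v)

theorem sum_pr_pair_fst (μ : Ω → ℝ) (X : Ω → A) (Z : Ω → C) (c : C) :
    ∑ a, pr μ (fun ω => (X ω, Z ω)) (a, c) = pr μ Z c := by
  have h := pr_comp μ (fun ω => (X ω, Z ω)) Prod.snd c
  simp only [Fintype.sum_prod_type] at h
  simpa using h.symm

theorem ent_comp (μ : Ω → ℝ) (V : Ω → G) (f : G → A) :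
    ent μ (fun ω => f (V ω)) = -∑ v, pr μ V v * logb 2 (pr μ (fun ω => f (V ω)) (f v)) := by
  simp only [ent, pr_comp μ V f, sum_mul, ite_mul, zero_mul]
  rw [sum_comm]
  simp

theorem ent_comp_of_injective (μ : Ω → ℝ) (V : Ω → G) {g : G → A}
    (hg : Function.Injective g) : ent μ (fun ω => g (V ω)) = ent μ V := by
  rw [ent_comp]
  simp only [pr_comp_of_injective μ V hg]
  rfl

/-- `p(x,z) p(y,z) / p(z)`: the law `(X, Y, Z)` would have if `X` and `Y` were conditionally
independent given `Z`. -/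
noncomputable def condProd (μ : Ω → ℝ) (X : Ω → A) (Y : Ω → B) (Z : Ω → C) (t : A × B × C) : ℝ :=
  pr μ (fun ω => (X ω, Z ω)) (t.1, t.2.2) * pr μ (fun ω => (Y ω, Z ω)) (t.2.1, t.2.2) /
    pr μ Z t.2.2

theorem condProd_nonneg (hμ : IsPMF μ) (X : Ω → A) (Y : Ω → B) (Z : Ω → C) (t : A × B × C) :
    0 ≤ condProd μ X Y Z t := by
  unfold condProd
  have := pr_nonneg hμ Z t.2.2
  have := pr_nonneg hμ (fun ω => (X ω, Z ω)) (t.1, t.2.2)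
  have := pr_nonneg hμ (fun ω => (Y ω, Z ω)) (t.2.1, t.2.2)
  positivity

theorem condProd_pos (hμ : IsPMF μ) {X : Ω → A} {Y : Ω → B} {Z : Ω → C} {t : A × B × C}
    (ht : 0 < pr μ (fun ω => (X ω, Y ω, Z ω)) t) : 0 < condProd μ X Y Z t := by
  have := pr_comp_pos hμ (fun t : A × B × C => (t.1, t.2.2)) ht
  have := pr_comp_pos hμ (fun t : A × B × C => (t.2.1, t.2.2)) ht
  have := pr_comp_pos hμ (fun t : A × B × C => t.2.2) ht
  unfold condProd
  positivity

theorem sum_condProd (hμ : IsPMF μ) (X : Ω → A) (Y : Ω → B) (Z : Ω → C) :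
    ∑ t, condProd μ X Y Z t = 1 := by
  calc ∑ t, condProd μ X Y Z t
      = ∑ c, (∑ a, pr μ (fun ω => (X ω, Z ω)) (a, c)) *
          (∑ b, pr μ (fun ω => (Y ω, Z ω)) (b, c)) / pr μ Z c := by
        simp only [condProd, Fintype.sum_prod_type, sum_mul_sum, sum_div]
        exact (sum_congr rfl fun _ _ => sum_comm).trans sum_comm
    _ = ∑ c, pr μ Z c := by simp only [sum_pr_pair_fst, mul_self_div_self]
    _ = 1 := sum_pr hμ Z

theorem cmi_eq_sum (hμ : IsPMF μ) (X : Ω → A) (Y : Ω → B) (Z : Ω → C) :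
    cmi μ X Y Z = ∑ t, pr μ (fun ω => (X ω, Y ω, Z ω)) t *
      logb 2 (pr μ (fun ω => (X ω, Y ω, Z ω)) t / condProd μ X Y Z t) := by
  set V := fun ω => (X ω, Y ω, Z ω)
  have hXZ := ent_comp μ V fun t => (t.1, t.2.2)
  have hYZ := ent_comp μ V fun t => (t.2.1, t.2.2)
  have hZ := ent_comp μ V fun t => t.2.2
  simp only [cmi, V] at hXZ hYZ hZ ⊢
  rw [hXZ, hYZ, hZ, ent, ← sum_neg_distrib]
  simp only [← sum_neg_distrib, ← sum_sub_distrib, ← sum_add_distrib]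
  refine sum_congr rfl fun t _ => ?_
  rcases (pr_nonneg hμ V t).eq_or_lt with h0 | h0
  · simp [V, ← h0]
  · have hXZ := pr_comp_pos hμ (fun t : A × B × C => (t.1, t.2.2)) h0
    have hYZ := pr_comp_pos hμ (fun t : A × B × C => (t.2.1, t.2.2)) h0
    have hZ := pr_comp_pos hμ (fun t : A × B × C => t.2.2) h0
    simp only [V] at hXZ hYZ hZ h0
    rw [condProd, logb_div h0.ne' (by positivity), logb_div (by positivity) hZ.ne',
      logb_mul hXZ.ne' hYZ.ne']
    ring

theorem cmi_nonneg (hμ : IsPMF μ) (X : Ω → A) (Y : Ω → B) (Z : Ω → C) : 0 ≤ cmi μ X Y Z := by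
  rw [cmi_eq_sum hμ]
  simp only [logb, mul_div_assoc']
  rw [← sum_div]
  refine div_nonneg (sum_mul_log_div_nonneg (pr_nonneg hμ _) (condProd_nonneg hμ X Y Z)
    (fun t => condProd_pos hμ) ?_) (log_nonneg one_le_two)
  rw [sum_condProd hμ, sum_pr hμ]

theorem cmi_eq_zero_of_condIndep (hμ : IsPMF μ) {X : Ω → A} {Y : Ω → B} {Z : Ω → C}
    (h : CondIndep μ X Y Z) : cmi μ X Y Z = 0 := by
  rw [cmi_eq_sum hμ]
  refine sum_eq_zero fun ⟨a, b, c⟩ _ => ?_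
  rcases (pr_nonneg hμ (fun ω => (X ω, Y ω, Z ω)) (a, b, c)).eq_or_lt with h0 | h0
  · simp [← h0]
  · have hZ := pr_comp_pos hμ (fun t : A × B × C => t.2.2) h0
    have hcond : condProd μ X Y Z (a, b, c) = pr μ (fun ω => (X ω, Y ω, Z ω)) (a, b, c) := by
      rw [condProd, ← h a b c, mul_div_cancel_right₀ _ hZ.ne']
    rw [hcond, div_self h0.ne', logb_one, mul_zero]

theorem condIndep_const_of_indep (hμ : IsPMF μ) {X : Ω → A} {Y : Ω → B} (h : Indep μ X Y) :
    CondIndep μ X Y fun _ => () := fun a b _ => by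
  simpa [pr, hμ.2] using h a b

theorem mi_eq_cmi_const (hμ : IsPMF μ) (X : Ω → A) (Y : Ω → B) :
    mi μ X Y = cmi μ X Y fun _ => () := by
  have hX : ent μ (fun ω => (X ω, ())) = ent μ X :=
    ent_comp_of_injective μ X (g := fun a => (a, ())) fun _ _ h => congrArg Prod.fst h
  have hY : ent μ (fun ω => (Y ω, ())) = ent μ Y :=
    ent_comp_of_injective μ Y (g := fun b => (b, ())) fun _ _ h => congrArg Prod.fst h
  have hXY : ent μ (fun ω => (X ω, Y ω, ())) = ent μ (fun ω => (X ω, Y ω)) :=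
    ent_comp_of_injective μ (fun ω => (X ω, Y ω)) (g := fun p => (p.1, p.2, ()))
      fun _ _ h => by simpa [Prod.ext_iff] using h
  have hconst : ent μ (fun _ => ()) = 0 := by simp [ent, pr, hμ.2]
  rw [mi, cmi, hX, hY, hXY, hconst]
  ring

theorem mi_nonneg (hμ : IsPMF μ) (X : Ω → A) (Y : Ω → B) : 0 ≤ mi μ X Y :=
  mi_eq_cmi_const hμ X Y ▸ cmi_nonneg hμ X Y _

theorem mi_eq_zero_of_indep (hμ : IsPMF μ) {X : Ω → A} {Y : Ω → B} (h : Indep μ X Y) :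
    mi μ X Y = 0 :=
  (mi_eq_cmi_const hμ X Y).trans (cmi_eq_zero_of_condIndep hμ (condIndep_const_of_indep hμ h))

section Identities

variable (X : Ω → A) (Y : Ω → B) (Z : Ω → C) (V : Ω → D)

theorem mi_comm : mi μ X Y = mi μ Y X := by
  have h : ent μ (fun ω => (Y ω, X ω)) = ent μ (fun ω => (X ω, Y ω)) :=
    ent_comp_of_injective μ (fun ω => (X ω, Y ω)) (g := Prod.swap) Prod.swap_injective
  rw [mi, mi, h]
  ring

theorem cmi_comm : cmi μ X Y Z = cmi μ Y X Z := by
  have h : ent μ (fun ω => (Y ω, X ω, Z ω)) = ent μ (fun ω => (X ω, Y ω, Z ω)) :=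
    ent_comp_of_injective μ (fun ω => (X ω, Y ω, Z ω)) (g := fun p => (p.2.1, p.1, p.2.2))
      fun _ _ h => by simp_all [Prod.ext_iff]
  rw [cmi, cmi, h]
  ring

theorem mi_pair_comm : mi μ (fun ω => (X ω, Y ω)) Z = mi μ (fun ω => (Y ω, X ω)) Z := by
  have h₁ : ent μ (fun ω => (Y ω, X ω)) = ent μ (fun ω => (X ω, Y ω)) :=
    ent_comp_of_injective μ (fun ω => (X ω, Y ω)) (g := Prod.swap) Prod.swap_injective
  have h₂ : ent μ (fun ω => ((Y ω, X ω), Z ω)) = ent μ (fun ω => ((X ω, Y ω), Z ω)) :=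
    ent_comp_of_injective μ (fun ω => ((X ω, Y ω), Z ω)) (g := fun p => (p.1.swap, p.2))
      fun _ _ h => by simp_all [Prod.ext_iff]
  rw [mi, mi, h₁, h₂]

theorem cmi_pair_comm :
    cmi μ X (fun ω => (Y ω, V ω)) Z = cmi μ X (fun ω => (V ω, Y ω)) Z := by
  have h₁ : ent μ (fun ω => ((V ω, Y ω), Z ω)) = ent μ (fun ω => ((Y ω, V ω), Z ω)) :=
    ent_comp_of_injective μ (fun ω => ((Y ω, V ω), Z ω)) (g := fun p => (p.1.swap, p.2))
      fun _ _ h => by simp_all [Prod.ext_iff]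
  have h₂ : ent μ (fun ω => (X ω, (V ω, Y ω), Z ω)) = ent μ (fun ω => (X ω, (Y ω, V ω), Z ω)) :=
    ent_comp_of_injective μ (fun ω => (X ω, (Y ω, V ω), Z ω))
      (g := fun p => (p.1, p.2.1.swap, p.2.2)) fun _ _ h => by simp_all [Prod.ext_iff]
  rw [cmi, cmi, h₁, h₂]

theorem cmi_cond_pair_comm :
    cmi μ X Y (fun ω => (Z ω, V ω)) = cmi μ X Y (fun ω => (V ω, Z ω)) := by
  have h₁ : ent μ (fun ω => (X ω, V ω, Z ω)) = ent μ (fun ω => (X ω, Z ω, V ω)) :=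
    ent_comp_of_injective μ (fun ω => (X ω, Z ω, V ω)) (g := fun p => (p.1, p.2.swap))
      fun _ _ h => by simp_all [Prod.ext_iff]
  have h₂ : ent μ (fun ω => (Y ω, V ω, Z ω)) = ent μ (fun ω => (Y ω, Z ω, V ω)) :=
    ent_comp_of_injective μ (fun ω => (Y ω, Z ω, V ω)) (g := fun p => (p.1, p.2.swap))
      fun _ _ h => by simp_all [Prod.ext_iff]
  have h₃ : ent μ (fun ω => (X ω, Y ω, V ω, Z ω)) = ent μ (fun ω => (X ω, Y ω, Z ω, V ω)) :=
    ent_comp_of_injective μ (fun ω => (X ω, Y ω, Z ω, V ω))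
      (g := fun p => (p.1, p.2.1, p.2.2.swap)) fun _ _ h => by simp_all [Prod.ext_iff]
  have h₄ : ent μ (fun ω => (V ω, Z ω)) = ent μ (fun ω => (Z ω, V ω)) :=
    ent_comp_of_injective μ (fun ω => (Z ω, V ω)) (g := Prod.swap) Prod.swap_injective
  rw [cmi, cmi, h₁, h₂, h₃, h₄]

theorem mi_pair_eq_add_cmi : mi μ (fun ω => (X ω, Y ω)) Z = mi μ X Z + cmi μ Y Z X := by
  have h₁ : ent μ (fun ω => (Y ω, X ω)) = ent μ (fun ω => (X ω, Y ω)) :=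
    ent_comp_of_injective μ (fun ω => (X ω, Y ω)) (g := Prod.swap) Prod.swap_injective
  have h₂ : ent μ (fun ω => (Z ω, X ω)) = ent μ (fun ω => (X ω, Z ω)) :=
    ent_comp_of_injective μ (fun ω => (X ω, Z ω)) (g := Prod.swap) Prod.swap_injective
  have h₃ : ent μ (fun ω => (Y ω, Z ω, X ω)) = ent μ (fun ω => ((X ω, Y ω), Z ω)) :=
    ent_comp_of_injective μ (fun ω => ((X ω, Y ω), Z ω)) (g := fun p => (p.1.2, p.2, p.1.1))
      fun _ _ h => by simp_all [Prod.ext_iff]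
  rw [mi, mi, cmi, h₁, h₂, h₃]
  ring

theorem cmi_pair_eq_add_cmi :
    cmi μ X (fun ω => (Y ω, V ω)) Z = cmi μ X Y Z + cmi μ X V (fun ω => (Y ω, Z ω)) := by
  have h₁ : ent μ (fun ω => (V ω, Y ω, Z ω)) = ent μ (fun ω => ((Y ω, V ω), Z ω)) :=
    ent_comp_of_injective μ (fun ω => ((Y ω, V ω), Z ω)) (g := fun p => (p.1.2, p.1.1, p.2))
      fun _ _ h => by simp_all [Prod.ext_iff]
  have h₂ : ent μ (fun ω => (X ω, V ω, Y ω, Z ω)) = ent μ (fun ω => (X ω, (Y ω, V ω), Z ω)) :=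
    ent_comp_of_injective μ (fun ω => (X ω, (Y ω, V ω), Z ω))
      (g := fun p => (p.1, p.2.1.2, p.2.1.1, p.2.2)) fun _ _ h => by simp_all [Prod.ext_iff]
  rw [cmi, cmi, cmi, h₁, h₂]
  ring

end Identities

section Inequalities

variable {X : Ω → A} {Y : Ω → B} {Z : Ω → C} {V : Ω → D}

theorem cmi_eq_zero_of_cmi_pair_eq_zero (hμ : IsPMF μ)
    (h : cmi μ X (fun ω => (Y ω, V ω)) Z = 0) : cmi μ X Y Z = 0 := by
  have := cmi_pair_eq_add_cmi (μ := μ) X Y Z V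
  linarith [cmi_nonneg hμ X Y Z, cmi_nonneg hμ X V fun ω => (Y ω, Z ω)]

theorem cmi_cond_eq_zero_of_cmi_pair_eq_zero (hμ : IsPMF μ)
    (h : cmi μ X (fun ω => (Y ω, V ω)) Z = 0) : cmi μ X V (fun ω => (Y ω, Z ω)) = 0 := by
  have := cmi_pair_eq_add_cmi (μ := μ) X Y Z V
  linarith [cmi_nonneg hμ X Y Z, cmi_nonneg hμ X V fun ω => (Y ω, Z ω)]

theorem cmi_le_cmi_of_cmi_eq_zero (hμ : IsPMF μ) (h : cmi μ X V (fun ω => (Y ω, Z ω)) = 0) :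
    cmi μ X V Z ≤ cmi μ X Y Z := by
  have h₁ := cmi_pair_eq_add_cmi (μ := μ) X Y Z V
  have h₂ := cmi_pair_eq_add_cmi (μ := μ) X V Z Y
  have h₃ := cmi_pair_comm (μ := μ) X Y Z V
  linarith [cmi_nonneg hμ X Y fun ω => (V ω, Z ω)]

theorem mi_le_mi_pair (hμ : IsPMF μ) (X : Ω → A) (Y : Ω → B) (Z : Ω → C) :
    mi μ X Z ≤ mi μ (fun ω => (X ω, Y ω)) Z := by
  rw [mi_pair_eq_add_cmi]
  linarith [cmi_nonneg hμ Y Z X]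

theorem mi_le_mi_of_cmi_eq_zero (hμ : IsPMF μ) (h : cmi μ X V Y = 0) :
    mi μ X V ≤ mi μ Y V := by
  have h₁ := mi_pair_eq_add_cmi (μ := μ) Y X V
  have h₂ := mi_pair_comm (μ := μ) Y X V
  linarith [mi_le_mi_pair hμ X Y V]

theorem mi_le_cmi_of_indep (hμ : IsPMF μ) (h : Indep μ X Z) : mi μ X Y ≤ cmi μ X Y Z := by
  have h₁ := mi_pair_eq_add_cmi (μ := μ) Z Y X
  have h₂ := mi_pair_comm (μ := μ) Z Y X
  rw [mi_comm Z, mi_eq_zero_of_indep hμ h, cmi_comm] at h₁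
  rw [mi_comm]
  linarith [mi_le_mi_pair hμ Y Z X]

theorem cmi_eq_zero_of_condIndep_pair {W : Ω → G} (hμ : IsPMF μ)
    (h : CondIndep μ W (fun ω => (X ω, Y ω)) Z) : cmi μ W Y (fun ω => (Z ω, X ω)) = 0 := by
  rw [cmi_cond_pair_comm]
  exact cmi_cond_eq_zero_of_cmi_pair_eq_zero hμ (cmi_eq_zero_of_condIndep hμ h)

end Inequalities

theorem stmt_3_general {Ω A B YR YR' UR UB XR YA YB : Type} [Fintype Ω]
    [Fintype A] [DecidableEq A] [Fintype B] [DecidableEq B]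
    [Fintype YR] [DecidableEq YR] [Fintype YR'] [DecidableEq YR']
    [Fintype UR] [DecidableEq UR] [Fintype UB] [DecidableEq UB]
    [Fintype XR] [DecidableEq XR] [Fintype YA] [DecidableEq YA]
    [Fintype YB] [DecidableEq YB]
    (μ : Ω → ℝ) (Xa : Ω → A) (Xb : Ω → B) (Yr : Ω → YR) (Yhr : Ω → YR')
    (Ur : Ω → UR) (Ub : Ω → UB) (Xr : Ω → XR) (Ya : Ω → YA) (Yb : Ω → YB)
    (Δ1 Δ2 Ra Rb : ℝ)
    (hμ : IsPMF μ) (hΔ1 : 0 ≤ Δ1) (hΔ2 : 0 ≤ Δ2)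
    (hind : Indep μ Xa Xb)
    (hMarkov1 : CondIndep μ Yhr (fun ω => (Xa ω, Xb ω)) Yr)
    (hMarkov2 : CondIndep μ (fun ω => (Ya ω, Yb ω)) (fun ω => (Ur ω, Ub ω)) Xr)
    (hRa : Ra < min (Δ1 * mi μ Xa Yr) (Δ2 * (mi μ Ur Yb - mi μ Ur Ub)))
    (hRb : Rb < Δ1 * cmi μ Xb Yhr Xa)
    (hSub : Δ1 * cmi μ Yr Yhr Xa <
      min (Δ2 * mi μ (fun ω => (Ur ω, Ub ω)) Ya) (Δ2 * mi μ Ub (fun ω => (Ur ω, Ya ω)))) :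
    Ra < min (Δ1 * cmi μ Xa Yr Xb) (Δ2 * mi μ Xr Yb) ∧
    Rb < min (Δ1 * cmi μ Xb Yr Xa) (Δ2 * mi μ Xr Ya) ∧
    Ra + Rb < Δ1 * mi μ (fun ω => (Xa ω, Xb ω)) Yr := by
  have hXa : mi μ Xa Yr ≤ cmi μ Xa Yr Xb := mi_le_cmi_of_indep hμ hind
  have hM1 := cmi_eq_zero_of_condIndep_pair hμ hMarkov1
  have hXb : cmi μ Xb Yhr Xa ≤ cmi μ Xb Yr Xa :=
    cmi_le_cmi_of_cmi_eq_zero hμ (by rwa [cmi_comm])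
  have hYr : cmi μ Xb Yhr Xa ≤ cmi μ Yr Yhr Xa := by
    rw [cmi_comm, cmi_comm Yr]
    exact cmi_le_cmi_of_cmi_eq_zero hμ hM1
  have hM2 : cmi μ (fun ω => (Ur ω, Ub ω)) (fun ω => (Ya ω, Yb ω)) Xr = 0 := by
    rw [cmi_comm]
    exact cmi_eq_zero_of_condIndep hμ hMarkov2
  have hYa : mi μ (fun ω => (Ur ω, Ub ω)) Ya ≤ mi μ Xr Ya :=
    mi_le_mi_of_cmi_eq_zero hμ (cmi_eq_zero_of_cmi_pair_eq_zero hμ hM2)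
  have hYb : mi μ Ur Yb - mi μ Ur Ub ≤ mi μ Xr Yb := by
    rw [cmi_pair_comm] at hM2
    linarith [mi_le_mi_of_cmi_eq_zero hμ (cmi_eq_zero_of_cmi_pair_eq_zero hμ hM2),
      mi_le_mi_pair hμ Ur Ub Yb, mi_nonneg hμ Ur Ub]
  simp only [lt_min_iff] at hRa hSub ⊢
  refine ⟨⟨hRa.1.trans_le (by gcongr), hRa.2.trans_le (by gcongr)⟩,
    ⟨hRb.trans_le (by gcongr), ?_⟩, ?_⟩
  · calc Rb < Δ1 * cmi μ Xb Yhr Xa := hRb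
      _ ≤ Δ1 * cmi μ Yr Yhr Xa := by gcongr
      _ < Δ2 * mi μ (fun ω => (Ur ω, Ub ω)) Ya := hSub.1
      _ ≤ Δ2 * mi μ Xr Ya := by gcongr
  · rw [mi_pair_eq_add_cmi, mul_add]
    exact add_lt_add hRa.1 (hRb.trans_le (by gcongr))

/-- Theorem 7 of the paper: every rate pair satisfying the mixed MABC
constraints also satisfies the DF MABC constraints.  Phase-1 variables
`X_a, X_b, Y_r, Ŷ_r` and phase-2 variables `U_r, U_b, X_r, Y_a, Y_b` with
`X_a ⟂ X_b`, Markov chains `(X_a,X_b) → Y_r → Ŷ_r` and `(U_r,U_b) → X_r → (Y_a,Y_b)`,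
and the two phase tuples independent of each other. -/
theorem stmt_3 {Ω A B YR YR' UR UB XR YA YB : Type} [Fintype Ω]
    [Fintype A] [DecidableEq A] [Fintype B] [DecidableEq B]
    [Fintype YR] [DecidableEq YR] [Fintype YR'] [DecidableEq YR']
    [Fintype UR] [DecidableEq UR] [Fintype UB] [DecidableEq UB]
    [Fintype XR] [DecidableEq XR] [Fintype YA] [DecidableEq YA]
    [Fintype YB] [DecidableEq YB]
    (μ : Ω → ℝ) (Xa : Ω → A) (Xb : Ω → B) (Yr : Ω → YR) (Yhr : Ω → YR')
    (Ur : Ω → UR) (Ub : Ω → UB) (Xr : Ω → XR) (Ya : Ω → YA) (Yb : Ω → YB)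
    (Δ1 Δ2 Ra Rb : ℝ)
    (hμ : IsPMF μ) (hΔ1 : 0 ≤ Δ1) (hΔ2 : 0 ≤ Δ2)
    (hind : Indep μ Xa Xb)
    (hMarkov1 : CondIndep μ Yhr (fun ω => (Xa ω, Xb ω)) Yr)
    (hMarkov2 : CondIndep μ (fun ω => (Ya ω, Yb ω)) (fun ω => (Ur ω, Ub ω)) Xr)
    (hPhases : Indep μ (fun ω => (Xa ω, Xb ω, Yr ω, Yhr ω))
      (fun ω => (Ur ω, Ub ω, Xr ω, Ya ω, Yb ω)))
    (hRa : Ra < min (Δ1 * mi μ Xa Yr) (Δ2 * (mi μ Ur Yb - mi μ Ur Ub)))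
    (hRb : Rb < Δ1 * cmi μ Xb Yhr Xa)
    (hSub : Δ1 * cmi μ Yr Yhr Xa <
      min (Δ2 * mi μ (fun ω => (Ur ω, Ub ω)) Ya) (Δ2 * mi μ Ub (fun ω => (Ur ω, Ya ω)))) :
    Ra < min (Δ1 * cmi μ Xa Yr Xb) (Δ2 * mi μ Xr Yb) ∧
    Rb < min (Δ1 * cmi μ Xb Yr Xa) (Δ2 * mi μ Xr Ya) ∧
    Ra + Rb < Δ1 * mi μ (fun ω => (Xa ω, Xb ω)) Yr :=
  stmt_3_general μ Xa Xb Yr Yhr Ur Ub Xr Ya Yb Δ1 Δ2 Ra Rb hμ hΔ1 hΔ2 hind hMarkov1 hMarkov2 hRa hRb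
    hSub

end BiDir
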